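/- arXiv:2603.06957 — 2 statements merged into one kernel-verified Lean document; each statement's English description precedes it below -/
import Mathlib

section
/- Let (x^{(t)}, y*(x^{(t)}))_{t=0}^{T-1} be an arbitrary (possibly adversarial, non-random) sequence of contexts and correct responses which satisfies the γ-margin inequalities with a common unit vector w*, let λ > 0, and suppose N k T γ²/λ ≥ e. Consider PG-PR iterates on this sequence with adaptive learning rate η_t = 1 / (2(λ + ‖∇ℓ_t(w_t)‖₂)) and initialization ‖w_0‖₂ ≤ (1/γ) log(N k T γ² / λ), where each behavior policy q_t may depend measurably on the past draws. Then for every i ∈ [N], in expectation over the random draws y^{(0)}, …, y^{(T-1)}, E[ (1/T) ∑_{t=0}^{T-1} q_t(y*_{1:i}(x^{(t)}) | x^{(t)}) · min( λ/2, − log p_{w_t}(y*_{1:i}(x^{(t)}) | x^{(t)}) ) ] ≤ 20 λ (log(N k T γ² / λ))² / (γ² T), where q_t(y_{1:i} | x) denotes the probability under q_t(· | x) that the drawn sequence has prefix y_{1:i}, and p_w(y_{1:i} | x) = ∏_{j=1}^i p_w(y_j | x, y_{1:j-1}). -/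
open MeasureTheory ProbabilityTheory
open scoped BigOperators RealInnerProductSpace ENNReal

noncomputable section

/-- Token-level autoregressive softmax probability. -/
def pTok {𝒳 : Type*} {D k : ℕ} (φ : 𝒳 → List (Fin k) → EuclideanSpace ℝ (Fin D))
    (w : EuclideanSpace ℝ (Fin D)) (x : 𝒳) (pre : List (Fin k)) (a : Fin k) : ℝ :=
  Real.exp ⟪w, φ x (pre ++ [a])⟫ / ∑ b : Fin k, Real.exp ⟪w, φ x (pre ++ [b])⟫

/-- Prefix `y_{1:i}` (the first `i` tokens) of a length-`N` response. -/
def pref {k N : ℕ} (y : Fin N → Fin k) (i : ℕ) : List (Fin k) := (List.ofFn y).take i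

/-- Probability of the length-`i` prefix: `p_w(y_{1:i} | x) = ∏_{j ≤ i} p_w(y_j | x, y_{1:j-1})`. -/
def pPre {𝒳 : Type*} {D k N : ℕ} (φ : 𝒳 → List (Fin k) → EuclideanSpace ℝ (Fin D))
    (w : EuclideanSpace ℝ (Fin D)) (x : 𝒳) (y : Fin N → Fin k) (i : ℕ) : ℝ :=
  ∏ j : Fin N, if (j : ℕ) < i then pTok φ w x (pref y j) (y j) else 1

/-- The PG-PR per-round loss `ℓ_t(w) = −∑_i A_i log p_w(y_i | x, y_{1:i-1})` with process
reward advantages `A_i = 1[y_{1:i} = y*_{1:i}]`. -/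
def lossPR {𝒳 : Type*} {D k N : ℕ} (φ : 𝒳 → List (Fin k) → EuclideanSpace ℝ (Fin D))
    (x : 𝒳) (ytrue y : Fin N → Fin k) (w : EuclideanSpace ℝ (Fin D)) : ℝ :=
  ∑ i : Fin N, (if pref y ((i : ℕ) + 1) = pref ytrue ((i : ℕ) + 1) then (1 : ℝ) else 0) *
    (- Real.log (pTok φ w x (pref y i) (y i)))


-- ===== auxiliary development =====
section Aux
section Tok


variable {D k : ℕ}

local notation "E" => EuclideanSpace ℝ (Fin D)

/-- softmax prob -/
def soft (ψ : Fin k → E) (w : E) (a : Fin k) : ℝ :=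
  Real.exp ⟪w, ψ a⟫ / ∑ b : Fin k, Real.exp ⟪w, ψ b⟫

def tokLoss (ψ : Fin k → E) (a : Fin k) (w : E) : ℝ := - Real.log (soft ψ w a)

def gTok (ψ : Fin k → E) (a : Fin k) (w : E) : E := (∑ b : Fin k, soft ψ w b • ψ b) - ψ a

variable [NeZero k]

lemma Z_pos (ψ : Fin k → E) (w : E) : 0 < ∑ b : Fin k, Real.exp ⟪w, ψ b⟫ :=
  Finset.sum_pos (fun b _ => Real.exp_pos _) Finset.univ_nonempty

lemma soft_pos (ψ : Fin k → E) (w : E) (a : Fin k) : 0 < soft ψ w a :=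
  div_pos (Real.exp_pos _) (Z_pos ψ w)

lemma soft_le_one (ψ : Fin k → E) (w : E) (a : Fin k) : soft ψ w a ≤ 1 := by
  rw [soft, div_le_one (Z_pos ψ w)]
  exact Finset.single_le_sum (f := fun b => Real.exp ⟪w, ψ b⟫)
    (fun b _ => (Real.exp_pos _).le) (Finset.mem_univ a)

lemma soft_sum (ψ : Fin k → E) (w : E) : ∑ a : Fin k, soft ψ w a = 1 := by
  simp only [soft]
  rw [← Finset.sum_div]
  exact div_self (Z_pos ψ w).ne'

lemma tokLoss_nonneg (ψ : Fin k → E) (a : Fin k) (w : E) : 0 ≤ tokLoss ψ a w := by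
  have := Real.log_nonpos (soft_pos ψ w a).le (soft_le_one ψ w a)
  simp [tokLoss]; linarith

lemma tokLoss_eq (ψ : Fin k → E) (a : Fin k) (w : E) :
    tokLoss ψ a w = Real.log (∑ b : Fin k, Real.exp ⟪w, ψ b⟫) - ⟪w, ψ a⟫ := by
  rw [tokLoss, soft, Real.log_div (Real.exp_pos _).ne' (Z_pos ψ w).ne', Real.log_exp]
  ring

lemma hasGradientAt_of_hasFDerivAt {f : E → ℝ} {L : E →L[ℝ] ℝ} {g w : E}
    (h : HasFDerivAt f L w) (hL : ∀ u, L u = ⟪g, u⟫) : HasGradientAt f g w := by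
  rw [hasGradientAt_iff_hasFDerivAt]
  have : (InnerProductSpace.toDual ℝ E g : E →L[ℝ] ℝ) = L := by
    ext u
    rw [hL u]; rfl
  rw [this]; exact h

lemma hasFDerivAt_inner_right (v w : E) :
    HasFDerivAt (fun u : E => ⟪u, v⟫) (innerSL ℝ v) w := by
  have h2 : (fun u : E => ⟪u, v⟫) = fun u => (innerSL ℝ v) u := by
    funext u; exact (real_inner_comm u v).symm
  rw [h2]
  exact (innerSL ℝ v).hasFDerivAt

lemma hasGradientAt_tokLoss (ψ : Fin k → E) (a : Fin k) (w : E) :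
    HasGradientAt (tokLoss ψ a) (gTok ψ a w) w := by
  have hZ : HasFDerivAt (fun u : E => ∑ b : Fin k, Real.exp ⟪u, ψ b⟫)
      (∑ b : Fin k, Real.exp ⟪w, ψ b⟫ • (innerSL ℝ (ψ b))) w := by
    apply HasFDerivAt.fun_sum
    intro b _
    exact (hasFDerivAt_inner_right (ψ b) w).exp
  have hlog : HasFDerivAt (fun u : E => Real.log (∑ b : Fin k, Real.exp ⟪u, ψ b⟫))
      ((∑ b : Fin k, Real.exp ⟪w, ψ b⟫)⁻¹ • ∑ b : Fin k, Real.exp ⟪w, ψ b⟫ • (innerSL ℝ (ψ b))) w :=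
    hZ.log (Z_pos ψ w).ne'
  have hfull : HasFDerivAt (tokLoss ψ a)
      (((∑ b : Fin k, Real.exp ⟪w, ψ b⟫)⁻¹ • ∑ b : Fin k, Real.exp ⟪w, ψ b⟫ • (innerSL ℝ (ψ b)))
        - innerSL ℝ (ψ a)) w := by
    have := hlog.sub (hasFDerivAt_inner_right (ψ a) w)
    have heq : tokLoss ψ a = fun u : E =>
        Real.log (∑ b : Fin k, Real.exp ⟪u, ψ b⟫) - ⟪u, ψ a⟫ := by
      funext u; exact tokLoss_eq ψ a u
    rw [heq]; exact this
  apply hasGradientAt_of_hasFDerivAt hfull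
  intro u
  simp only [ContinuousLinearMap.sub_apply, ContinuousLinearMap.smul_apply,
    ContinuousLinearMap.sum_apply, innerSL_apply_apply, gTok, inner_sub_left, inner_sum,
    real_inner_smul_left, soft]
  rw [Finset.smul_sum]
  simp only [smul_eq_mul]
  rw [Finset.sum_congr rfl (fun b _ => by ring : ∀ b ∈ Finset.univ,
    (∑ c : Fin k, Real.exp ⟪w, ψ c⟫)⁻¹ * (Real.exp ⟪w, ψ b⟫ * ⟪ψ b, u⟫)
      = Real.exp ⟪w, ψ b⟫ / (∑ c : Fin k, Real.exp ⟪w, ψ c⟫) * ⟪ψ b, u⟫)]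
  rw [sum_inner]
  simp [real_inner_smul_left]

lemma gTok_eq (ψ : Fin k → E) (a : Fin k) (w : E) :
    gTok ψ a w = ∑ b : Fin k, soft ψ w b • (ψ b - ψ a) := by
  simp only [smul_sub, Finset.sum_sub_distrib, ← Finset.sum_smul, soft_sum, one_smul, gTok]

lemma norm_gTok_le (ψ : Fin k → E) (a : Fin k) (w : E) (hψ : ∀ b, ‖ψ b‖ ≤ 1) :
    ‖gTok ψ a w‖ ≤ 2 * (1 - soft ψ w a) := by
  rw [gTok_eq]
  calc ‖∑ b : Fin k, soft ψ w b • (ψ b - ψ a)‖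
      ≤ ∑ b : Fin k, ‖soft ψ w b • (ψ b - ψ a)‖ := norm_sum_le _ _
    _ ≤ ∑ b : Fin k, (if b = a then 0 else soft ψ w b * 2) := by
        apply Finset.sum_le_sum
        intro b _
        rw [norm_smul, Real.norm_eq_abs, abs_of_pos (soft_pos ψ w b)]
        by_cases hb : b = a
        · simp [hb]
        · simp only [hb, if_false]
          apply mul_le_mul_of_nonneg_left _ (soft_pos ψ w b).le
          calc ‖ψ b - ψ a‖ ≤ ‖ψ b‖ + ‖ψ a‖ := norm_sub_le _ _
            _ ≤ 2 := by linarith [hψ b, hψ a]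
    _ = 2 * (1 - soft ψ w a) := by
        have hsplit : ∀ b : Fin k, (if b = a then (0:ℝ) else soft ψ w b * 2)
            = soft ψ w b * 2 - (if b = a then soft ψ w b * 2 else 0) := by
          intro b; split <;> ring
        rw [Finset.sum_congr rfl (fun b _ => hsplit b), Finset.sum_sub_distrib,
          Finset.sum_ite_eq' Finset.univ a (fun b => soft ψ w b * 2), if_pos (Finset.mem_univ a),
          ← Finset.sum_mul, soft_sum]
        ring

lemma one_sub_soft_le_tokLoss (ψ : Fin k → E) (a : Fin k) (w : E) :
    1 - soft ψ w a ≤ tokLoss ψ a w := by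
  have := Real.log_le_sub_one_of_pos (soft_pos ψ w a)
  rw [tokLoss]; linarith

lemma norm_gTok_le_tokLoss (ψ : Fin k → E) (a : Fin k) (w : E) (hψ : ∀ b, ‖ψ b‖ ≤ 1) :
    ‖gTok ψ a w‖ ≤ 2 * tokLoss ψ a w := by
  have h1 := norm_gTok_le ψ a w hψ
  have h2 := one_sub_soft_le_tokLoss ψ a w
  linarith

lemma tokLoss_convex (ψ : Fin k → E) (a : Fin k) (w u : E) :
    tokLoss ψ a w + ⟪gTok ψ a w, u - w⟫ ≤ tokLoss ψ a u := by
  rw [tokLoss_eq, tokLoss_eq]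
  have hkey : ∑ b : Fin k, soft ψ w b * ⟪u - w, ψ b⟫ ≤
      Real.log (∑ b : Fin k, Real.exp ⟪u, ψ b⟫) -
        Real.log (∑ b : Fin k, Real.exp ⟪w, ψ b⟫) := by
    have hjen : Real.exp (∑ b : Fin k, soft ψ w b • ⟪u - w, ψ b⟫) ≤
        ∑ b : Fin k, soft ψ w b • Real.exp ⟪u - w, ψ b⟫ :=
      ConvexOn.map_sum_le convexOn_exp (fun b _ => (soft_pos ψ w b).le) (soft_sum ψ w)
        (fun b _ => Set.mem_univ _)
    have hZ : ∑ b : Fin k, soft ψ w b * Real.exp ⟪u - w, ψ b⟫ =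
        (∑ b : Fin k, Real.exp ⟪u, ψ b⟫) / (∑ b : Fin k, Real.exp ⟪w, ψ b⟫) := by
      rw [eq_div_iff (Z_pos ψ w).ne', Finset.sum_mul]
      apply Finset.sum_congr rfl
      intro b _
      have hub : ⟪u, ψ b⟫ = ⟪w, ψ b⟫ + ⟪u - w, ψ b⟫ := by
        rw [inner_sub_left]; ring
      rw [soft, hub, Real.exp_add]
      field_simp
    have hjen' : Real.exp (∑ b : Fin k, soft ψ w b * ⟪u - w, ψ b⟫) ≤
        (∑ b : Fin k, Real.exp ⟪u, ψ b⟫) / (∑ b : Fin k, Real.exp ⟪w, ψ b⟫) := by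
      rw [← hZ]
      simpa using hjen
    have hlog := Real.log_le_log (Real.exp_pos _) hjen'
    rw [Real.log_exp, Real.log_div (Z_pos ψ u).ne' (Z_pos ψ w).ne'] at hlog
    simpa using hlog
  have hg : ⟪gTok ψ a w, u - w⟫ =
      (∑ b : Fin k, soft ψ w b * ⟪u - w, ψ b⟫) - ⟪u - w, ψ a⟫ := by
    rw [gTok, inner_sub_left, sum_inner]
    congr 1
    · apply Finset.sum_congr rfl
      intro b _
      rw [real_inner_smul_left, real_inner_comm]
    · exact real_inner_comm _ _
  rw [hg]
  have : ⟪u - w, ψ a⟫ = ⟪u, ψ a⟫ - ⟪w, ψ a⟫ := inner_sub_left _ _ _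
  linarith

lemma tokLoss_le_of_margin (ψ : Fin k → E) (a : Fin k) (u : E) (c : ℝ)
    (hm : ∀ b : Fin k, b ≠ a → ⟪u, ψ b⟫ ≤ ⟪u, ψ a⟫ - c) :
    tokLoss ψ a u ≤ k * Real.exp (-c) := by
  rw [tokLoss_eq]
  have hZle : (∑ b : Fin k, Real.exp ⟪u, ψ b⟫) ≤
      Real.exp ⟪u, ψ a⟫ * (1 + k * Real.exp (-c)) := by
    rw [← Finset.add_sum_erase Finset.univ _ (Finset.mem_univ a)]
    have hsum : ∑ b ∈ Finset.univ.erase a, Real.exp ⟪u, ψ b⟫ ≤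
        (k : ℝ) * (Real.exp ⟪u, ψ a⟫ * Real.exp (-c)) := by
      calc ∑ b ∈ Finset.univ.erase a, Real.exp ⟪u, ψ b⟫
          ≤ ∑ _b ∈ Finset.univ.erase a, Real.exp ⟪u, ψ a⟫ * Real.exp (-c) := by
            apply Finset.sum_le_sum
            intro b hb
            rw [← Real.exp_add]
            exact Real.exp_le_exp.2 (by linarith [hm b (Finset.mem_erase.1 hb).1])
        _ ≤ (k : ℝ) * (Real.exp ⟪u, ψ a⟫ * Real.exp (-c)) := by
            rw [Finset.sum_const, nsmul_eq_mul]
            apply mul_le_mul_of_nonneg_right _ (by positivity)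
            have : (Finset.univ.erase a).card ≤ k := by
              simpa using Finset.card_le_univ (Finset.univ.erase a)
            exact_mod_cast this
    nlinarith [Real.exp_pos ⟪u, ψ a⟫, Real.exp_pos (-c)]
  have hlogle : Real.log (∑ b : Fin k, Real.exp ⟪u, ψ b⟫) ≤
      ⟪u, ψ a⟫ + Real.log (1 + k * Real.exp (-c)) := by
    have := Real.log_le_log (Z_pos ψ u) hZle
    rwa [Real.log_mul (Real.exp_pos _).ne' (by positivity), Real.log_exp] at this
  have hlog1 : Real.log (1 + k * Real.exp (-c)) ≤ k * Real.exp (-c) := by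
    have := Real.log_le_sub_one_of_pos (show (0:ℝ) < 1 + k * Real.exp (-c) by positivity)
    linarith
  linarith


end Tok
section Pref
variable {k N : ℕ}


lemma pref_length (y : Fin N → Fin k) (i : ℕ) (hi : i ≤ N) : (pref y i).length = i := by
  simp [pref, hi]

lemma pref_succ (y : Fin N → Fin k) (j : Fin N) :
    pref y ((j : ℕ) + 1) = pref y (j : ℕ) ++ [y j] := by
  simp [pref, List.take_succ, List.getElem?_ofFn, j.isLt]

lemma pref_take (y : Fin N → Fin k) {i i' : ℕ} (h : i ≤ i') :
    pref y i = (pref y i').take i := by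
  simp [pref, List.take_take, Nat.min_eq_left h]

lemma pref_eq_of_le {y z : Fin N → Fin k} {i j : ℕ} (h : pref y i = pref z i) (hj : j ≤ i) :
    pref y j = pref z j := by
  rw [pref_take y hj, pref_take z hj, h]

lemma pref_succ_eq {y z : Fin N → Fin k} {j : Fin N}
    (h : pref y ((j : ℕ) + 1) = pref z ((j : ℕ) + 1)) :
    pref y (j : ℕ) = pref z (j : ℕ) ∧ y j = z j := by
  rw [pref_succ, pref_succ] at h
  have hlen : (pref y (j : ℕ)).length = (pref z (j : ℕ)).length := by
    rw [pref_length y _ (le_of_lt j.isLt), pref_length z _ (le_of_lt j.isLt)]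
  obtain ⟨h1, h2⟩ := List.append_inj h hlen
  exact ⟨h1, by simpa using h2⟩

end Pref
section LossLevel
variable {𝒳 : Type*} {D k N : ℕ} [NeZero k]

local notation "E" => EuclideanSpace ℝ (Fin D)

/-- feature vectors of the candidate tokens after a prefix -/
def ψtok (φ : 𝒳 → List (Fin k) → E) (x : 𝒳) (pre : List (Fin k)) : Fin k → E :=
  fun b => φ x (pre ++ [b])

/-- advantage coefficient -/
def cA (ytrue y : Fin N → Fin k) (j : Fin N) : ℝ :=
  if pref y ((j : ℕ) + 1) = pref ytrue ((j : ℕ) + 1) then 1 else 0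

lemma cA_nonneg (ytrue y : Fin N → Fin k) (j : Fin N) : 0 ≤ cA ytrue y j := by
  unfold cA; split <;> norm_num

lemma cA_le_one (ytrue y : Fin N → Fin k) (j : Fin N) : cA ytrue y j ≤ 1 := by
  unfold cA; split <;> norm_num

/-- gradient of the PG-PR loss -/
def gLoss (φ : 𝒳 → List (Fin k) → E) (x : 𝒳) (ytrue y : Fin N → Fin k) (w : E) : E :=
  ∑ j : Fin N, cA ytrue y j • gTok (ψtok φ x (pref y j)) (y j) w

lemma lossPR_eq (φ : 𝒳 → List (Fin k) → E) (x : 𝒳) (ytrue y : Fin N → Fin k) (w : E) :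
    lossPR φ x ytrue y w = ∑ j : Fin N, cA ytrue y j * tokLoss (ψtok φ x (pref y j)) (y j) w :=
  rfl

lemma lossPR_nonneg (φ : 𝒳 → List (Fin k) → E) (x : 𝒳) (ytrue y : Fin N → Fin k) (w : E) :
    0 ≤ lossPR φ x ytrue y w := by
  rw [lossPR_eq]
  exact Finset.sum_nonneg fun j _ =>
    mul_nonneg (cA_nonneg ytrue y j) (tokLoss_nonneg _ _ _)

lemma hasGradientAt_lossPR (φ : 𝒳 → List (Fin k) → E) (x : 𝒳) (ytrue y : Fin N → Fin k)
    (w : E) : HasGradientAt (lossPR φ x ytrue y) (gLoss φ x ytrue y w) w := by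
  have htok : ∀ j : Fin N, HasFDerivAt (tokLoss (ψtok φ x (pref y j)) (y j))
      (InnerProductSpace.toDual ℝ E (gTok (ψtok φ x (pref y j)) (y j) w)) w := fun j =>
    (hasGradientAt_iff_hasFDerivAt.1 (hasGradientAt_tokLoss _ _ w))
  have hsum : HasFDerivAt (lossPR φ x ytrue y)
      (∑ j : Fin N, cA ytrue y j •
        (InnerProductSpace.toDual ℝ E (gTok (ψtok φ x (pref y j)) (y j) w))) w := by
    have : HasFDerivAt (fun u => ∑ j : Fin N,
        cA ytrue y j * tokLoss (ψtok φ x (pref y j)) (y j) u)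
        (∑ j : Fin N, cA ytrue y j •
          (InnerProductSpace.toDual ℝ E (gTok (ψtok φ x (pref y j)) (y j) w))) w :=
      HasFDerivAt.fun_sum fun j _ => (htok j).const_mul (cA ytrue y j)
    have heq : lossPR φ x ytrue y = fun u => ∑ j : Fin N,
        cA ytrue y j * tokLoss (ψtok φ x (pref y j)) (y j) u := by
      funext u; exact lossPR_eq φ x ytrue y u
    rw [heq]; exact this
  apply hasGradientAt_of_hasFDerivAt hsum
  intro u
  simp only [ContinuousLinearMap.coe_sum', Finset.sum_apply, ContinuousLinearMap.coe_smul',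
    Pi.smul_apply, InnerProductSpace.toDual_apply_apply, smul_eq_mul, gLoss, sum_inner,
    real_inner_smul_left]

lemma norm_gLoss_le (φ : 𝒳 → List (Fin k) → E) (x : 𝒳) (ytrue y : Fin N → Fin k) (w : E)
    (hφ : ∀ j : Fin N, ∀ b : Fin k, ‖φ x (pref y j ++ [b])‖ ≤ 1) :
    ‖gLoss φ x ytrue y w‖ ≤ 2 * lossPR φ x ytrue y w := by
  rw [lossPR_eq, gLoss]
  calc ‖∑ j : Fin N, cA ytrue y j • gTok (ψtok φ x (pref y j)) (y j) w‖
      ≤ ∑ j : Fin N, ‖cA ytrue y j • gTok (ψtok φ x (pref y j)) (y j) w‖ := norm_sum_le _ _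
    _ ≤ ∑ j : Fin N, cA ytrue y j * (2 * tokLoss (ψtok φ x (pref y j)) (y j) w) := by
        apply Finset.sum_le_sum
        intro j _
        rw [norm_smul, Real.norm_eq_abs, abs_of_nonneg (cA_nonneg ytrue y j)]
        exact mul_le_mul_of_nonneg_left
          (norm_gTok_le_tokLoss _ _ _ (fun b => hφ j b)) (cA_nonneg ytrue y j)
    _ = 2 * ∑ j : Fin N, cA ytrue y j * tokLoss (ψtok φ x (pref y j)) (y j) w := by
        rw [Finset.mul_sum]; apply Finset.sum_congr rfl; intro j _; ring

lemma lossPR_convex (φ : 𝒳 → List (Fin k) → E) (x : 𝒳) (ytrue y : Fin N → Fin k) (w u : E) :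
    lossPR φ x ytrue y w + ⟪gLoss φ x ytrue y w, u - w⟫ ≤ lossPR φ x ytrue y u := by
  rw [lossPR_eq, lossPR_eq, gLoss, sum_inner, ← Finset.sum_add_distrib]
  apply Finset.sum_le_sum
  intro j _
  rw [real_inner_smul_left]
  have := tokLoss_convex (ψtok φ x (pref y j)) (y j) w u
  have hc := cA_nonneg ytrue y j
  nlinarith [this, hc]

lemma pPre_pos (φ : 𝒳 → List (Fin k) → E) (x : 𝒳) (ys : Fin N → Fin k) (w : E) (i : ℕ) :
    0 < pPre φ w x ys i := by
  apply Finset.prod_pos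
  intro j _
  split
  · exact soft_pos (ψtok φ x (pref ys j)) w (ys j)
  · norm_num

lemma neg_log_pPre (φ : 𝒳 → List (Fin k) → E) (x : 𝒳) (ys : Fin N → Fin k) (w : E) (i : ℕ) :
    - Real.log (pPre φ w x ys i) =
      ∑ j : Fin N, if (j : ℕ) < i then tokLoss (ψtok φ x (pref ys j)) (ys j) w else 0 := by
  rw [pPre, Real.log_prod]
  · rw [← Finset.sum_neg_distrib]
    apply Finset.sum_congr rfl
    intro j _
    split
    · rfl
    · simp
  · intro j _
    split
    · exact (soft_pos (ψtok φ x (pref ys j)) w (ys j)).ne'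
    · norm_num

lemma neg_log_pPre_nonneg (φ : 𝒳 → List (Fin k) → E) (x : 𝒳) (ys : Fin N → Fin k)
    (w : E) (i : ℕ) : 0 ≤ - Real.log (pPre φ w x ys i) := by
  rw [neg_log_pPre]
  apply Finset.sum_nonneg
  intro j _
  split
  · exact tokLoss_nonneg _ _ _
  · norm_num

lemma neg_log_pPre_le_lossPR (φ : 𝒳 → List (Fin k) → E) (x : 𝒳)
    (ytrue y : Fin N → Fin k) (w : E) (i : ℕ)
    (hpref : pref y i = pref ytrue i) :
    - Real.log (pPre φ w x ytrue i) ≤ lossPR φ x ytrue y w := by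
  rw [neg_log_pPre, lossPR_eq]
  apply Finset.sum_le_sum
  intro j _
  by_cases hj : (j : ℕ) < i
  · rw [if_pos hj]
    have hsucc : pref y ((j : ℕ) + 1) = pref ytrue ((j : ℕ) + 1) :=
      pref_eq_of_le hpref (by omega)
    obtain ⟨hpre, htok⟩ := pref_succ_eq hsucc
    rw [cA, if_pos hsucc, one_mul, hpre, htok]
  · rw [if_neg hj]
    exact mul_nonneg (cA_nonneg _ _ _) (tokLoss_nonneg _ _ _)

lemma lossPR_comparator (φ : 𝒳 → List (Fin k) → E) (x : 𝒳) (ys y : Fin N → Fin k)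
    (wstar : E) (s γ : ℝ) (hs : 0 ≤ s)
    (hm : ∀ j : Fin N, ∀ b : Fin k, b ≠ ys j →
      ⟪wstar, φ x (pref ys ((j : ℕ) + 1))⟫ ≥ ⟪wstar, φ x (pref ys (j : ℕ) ++ [b])⟫ + γ) :
    lossPR φ x ys y (s • wstar) ≤ (N : ℝ) * k * Real.exp (-(s * γ)) := by
  rw [lossPR_eq]
  calc ∑ j : Fin N, cA ys y j * tokLoss (ψtok φ x (pref y j)) (y j) (s • wstar)
      ≤ ∑ _j : Fin N, (k : ℝ) * Real.exp (-(s * γ)) := by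
        apply Finset.sum_le_sum
        intro j _
        by_cases hc : pref y ((j : ℕ) + 1) = pref ys ((j : ℕ) + 1)
        · obtain ⟨hpre, htok⟩ := pref_succ_eq hc
          rw [cA, if_pos hc, one_mul, hpre, htok]
          apply tokLoss_le_of_margin
          intro b hb
          have hmar := hm j b hb
          rw [pref_succ] at hmar
          have h1 : ⟪s • wstar, ψtok φ x (pref ys (j : ℕ)) b⟫
              = s * ⟪wstar, φ x (pref ys (j : ℕ) ++ [b])⟫ := real_inner_smul_left _ _ _
          have h2 : ⟪s • wstar, ψtok φ x (pref ys (j : ℕ)) (ys j)⟫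
              = s * ⟪wstar, φ x (pref ys (j : ℕ) ++ [ys j])⟫ := real_inner_smul_left _ _ _
          rw [h1, h2]
          have := mul_le_mul_of_nonneg_left (by linarith [hmar] :
            ⟪wstar, φ x (pref ys (j : ℕ) ++ [b])⟫ ≤ ⟪wstar, φ x (pref ys (j : ℕ) ++ [ys j])⟫ - γ) hs
          nlinarith
        · rw [cA, if_neg hc, zero_mul]
          positivity
    _ = (N : ℝ) * k * Real.exp (-(s * γ)) := by
        rw [Finset.sum_const, Finset.card_univ, Fintype.card_fin, nsmul_eq_mul]
        ring

end LossLevel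

section Descent
variable {D : ℕ}
local notation "E'" => EuclideanSpace ℝ (Fin D)

lemma descent_step (w u g : E') (lam ℓw ℓu : ℝ) (hlam : 0 < lam)
    (hconv : ℓw + ⟪g, u - w⟫ ≤ ℓu) (hg : ‖g‖ ≤ 2 * ℓw) (hℓw : 0 ≤ ℓw) :
    ‖(w - (2 * (lam + ‖g‖))⁻¹ • g) - u‖ ^ 2 ≤
      ‖w - u‖ ^ 2 - (2 * (lam + ‖g‖))⁻¹ * ℓw + 2 * ((2 * (lam + ‖g‖))⁻¹ * ℓu) := by
  set η : ℝ := (2 * (lam + ‖g‖))⁻¹ with hη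
  have hgn : 0 ≤ ‖g‖ := norm_nonneg g
  have hA : (0:ℝ) < 2 * (lam + ‖g‖) := by linarith
  have hη0 : 0 ≤ η := le_of_lt (inv_pos.2 hA)
  have hηg : η * ‖g‖ ≤ 1 / 2 := by
    rw [hη]
    rw [inv_mul_le_iff₀ hA]
    linarith
  have hexp : ‖(w - η • g) - u‖ ^ 2
      = ‖w - u‖ ^ 2 - 2 * (η * ⟪w - u, g⟫) + η ^ 2 * ‖g‖ ^ 2 := by
    have h1 : (w - η • g) - u = (w - u) - η • g := by abel
    rw [h1, norm_sub_sq_real, real_inner_smul_right, norm_smul]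
    simp [Real.norm_eq_abs, abs_of_nonneg hη0]
    ring
  rw [hexp]
  have hio : ⟪g, u - w⟫ = - ⟪w - u, g⟫ := by
    rw [real_inner_comm, show u - w = -(w - u) by abel, inner_neg_left]
  rw [hio] at hconv
  have h2 : η ^ 2 * ‖g‖ ^ 2 ≤ η * ℓw := by
    have : η ^ 2 * ‖g‖ ^ 2 = (η * ‖g‖) * (η * ‖g‖) := by ring
    rw [this]
    calc (η * ‖g‖) * (η * ‖g‖) ≤ (1/2) * (η * ‖g‖) := by
          apply mul_le_mul_of_nonneg_right hηg (mul_nonneg hη0 hgn)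
      _ ≤ (1/2) * (η * (2 * ℓw)) := by
          apply mul_le_mul_of_nonneg_left (mul_le_mul_of_nonneg_left hg hη0) (by norm_num)
      _ = η * ℓw := by ring
  nlinarith [mul_le_mul_of_nonneg_left hconv hη0]

lemma min_le_eta_mul {lam S ℓ gn : ℝ} (hlam : 0 < lam) (hS0 : 0 ≤ S) (hSl : S ≤ ℓ)
    (hg0 : 0 ≤ gn) (hg : gn ≤ 2 * ℓ) :
    min (lam / 2) S ≤ 4 * lam * ((2 * (lam + gn))⁻¹ * ℓ) := by
  have hA : (0:ℝ) < 2 * (lam + gn) := by linarith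
  have hrw : 4 * lam * ((2 * (lam + gn))⁻¹ * ℓ) = (4 * lam * ℓ) / (2 * (lam + gn)) := by
    field_simp
  rw [hrw, le_div_iff₀ hA]
  rcases le_total ℓ (lam / 2) with h | h
  · have hm : min (lam / 2) S ≤ ℓ := le_trans (min_le_right _ _) hSl
    have hm0 : 0 ≤ min (lam / 2) S := le_min (by linarith) hS0
    nlinarith
  · have hm : min (lam / 2) S ≤ lam / 2 := min_le_left _ _
    have hm0 : 0 ≤ min (lam / 2) S := le_min (by linarith) hS0
    nlinarith

end Descent

section Pathwise
variable {𝒳 : Type*} {D k N T : ℕ} [NeZero k]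
local notation "E'" => EuclideanSpace ℝ (Fin D)

lemma pathwise_bound (φ : 𝒳 → List (Fin k) → E') (x : ℕ → 𝒳) (ystar : 𝒳 → Fin N → Fin k)
    (γ lam : ℝ) (hγ : 0 < γ) (hlam : 0 < lam) (hN : 1 ≤ N) (hk : 2 ≤ k) (hT : 1 ≤ T)
    (wstar : E') (hws : ‖wstar‖ = 1)
    (hmargin : ∀ t : Fin T, ∀ i : Fin N, ∀ a : Fin k, a ≠ ystar (x t) i →
      ⟪wstar, φ (x t) (pref (ystar (x t)) ((i : ℕ) + 1))⟫ ≥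
        ⟪wstar, φ (x t) (pref (ystar (x t)) (i : ℕ) ++ [a])⟫ + γ)
    (hφnorm : ∀ x' : 𝒳, ∀ l : List (Fin k), l ≠ [] → l.length ≤ N → ‖φ x' l‖ ≤ 1)
    (hscale : Real.exp 1 ≤ (N : ℝ) * k * T * γ ^ 2 / lam)
    (y : ℕ → (Fin N → Fin k)) (w : ℕ → E')
    (hw0 : ‖w 0‖ ≤ γ⁻¹ * Real.log ((N : ℝ) * k * T * γ ^ 2 / lam))
    (hrec : ∀ t : Fin T, w ((t : ℕ) + 1) = w (t : ℕ) -
        (2 * (lam + ‖gradient (lossPR φ (x t) (ystar (x t)) (y t)) (w (t : ℕ))‖))⁻¹ •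
          gradient (lossPR φ (x t) (ystar (x t)) (y t)) (w (t : ℕ)))
    (i : ℕ) (hi1 : 1 ≤ i) (hiN : i ≤ N) :
    ∑ t : Fin T, ((if pref (y (t : ℕ)) i = pref (ystar (x t)) i then (1:ℝ) else 0) *
        min (lam / 2) (- Real.log (pPre φ (w (t : ℕ)) (x t) (ystar (x t)) i))) ≤
      20 * lam * (Real.log ((N : ℝ) * k * T * γ ^ 2 / lam)) ^ 2 / γ ^ 2 := by
  set R : ℝ := (N : ℝ) * k * T * γ ^ 2 / lam with hR
  set L : ℝ := Real.log R with hLdef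
  have hN0 : (0:ℝ) < N := by exact_mod_cast Nat.lt_of_lt_of_le Nat.zero_lt_one hN
  have hk0 : (0:ℝ) < k := by positivity
  have hT0 : (0:ℝ) < T := by exact_mod_cast Nat.lt_of_lt_of_le Nat.zero_lt_one hT
  have hR0 : 0 < R := lt_of_lt_of_le (Real.exp_pos 1) hscale
  have hL1 : 1 ≤ L := (Real.le_log_iff_exp_le hR0).2 hscale
  have hL0 : 0 < L := lt_of_lt_of_le one_pos hL1
  -- the comparator
  set u : EuclideanSpace ℝ (Fin D) := (L / γ) • wstar with hu
  have hLγ : 0 ≤ L / γ := le_of_lt (div_pos hL0 hγ)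
  have hunorm : ‖u‖ = L / γ := by
    rw [hu, norm_smul, hws, Real.norm_eq_abs, abs_of_nonneg hLγ, mul_one]
  -- abbreviations
  set g : ℕ → EuclideanSpace ℝ (Fin D) := fun t =>
    gLoss φ (x t) (ystar (x t)) (y t) (w t) with hgdef
  have hgrad : ∀ t : Fin T, gradient (lossPR φ (x t) (ystar (x t)) (y t)) (w (t : ℕ))
      = g (t : ℕ) := fun t => (hasGradientAt_lossPR _ _ _ _ _).gradient
  set η : ℕ → ℝ := fun t => (2 * (lam + ‖g t‖))⁻¹ with hηdef
  set ℓ : ℕ → ℝ := fun t => lossPR φ (x t) (ystar (x t)) (y t) (w t) with hℓdef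
  set ℓu : ℕ → ℝ := fun t => lossPR φ (x t) (ystar (x t)) (y t) u with hℓudef
  have hη0 : ∀ t, 0 ≤ η t := by
    intro t
    apply le_of_lt (inv_pos.2 _)
    have := norm_nonneg (g t)
    linarith
  have hℓ0 : ∀ t, 0 ≤ ℓ t := fun t => lossPR_nonneg _ _ _ _ _
  have hℓu0 : ∀ t, 0 ≤ ℓu t := fun t => lossPR_nonneg _ _ _ _ _
  -- feature norm bounds along realized prefixes
  have hφ : ∀ t : ℕ, ∀ z : Fin N → Fin k, ∀ j : Fin N, ∀ b : Fin k,
      ‖φ (x t) (pref z (j : ℕ) ++ [b])‖ ≤ 1 := by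
    intro t z j b
    apply hφnorm
    · simp
    · rw [List.length_append, pref_length z _ (le_of_lt j.isLt)]
      have hj := j.isLt
      simp only [List.length_singleton]
      omega
  -- gradient norm bound
  have hgnorm : ∀ t : ℕ, ‖g t‖ ≤ 2 * ℓ t := by
    intro t
    exact norm_gLoss_le φ (x t) (ystar (x t)) (y t) (w t) (fun j b => hφ t (y t) j b)
  -- comparator loss bound
  have hcomp : ∀ t : Fin T, ℓu (t : ℕ) ≤ lam / (T * γ ^ 2) := by
    intro t
    have h1 : ℓu (t : ℕ) ≤ (N : ℝ) * k * Real.exp (-(L / γ * γ)) := by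
      apply lossPR_comparator φ (x t) (ystar (x t)) (y (t : ℕ)) wstar (L / γ) γ hLγ
      intro j b hb
      exact hmargin t j b hb
    have h2 : L / γ * γ = L := div_mul_cancel₀ L (ne_of_gt hγ)
    rw [h2] at h1
    have h3 : Real.exp (-L) = R⁻¹ := by
      rw [Real.exp_neg, hLdef, Real.exp_log hR0]
    rw [h3] at h1
    have h4 : (N : ℝ) * k * R⁻¹ = lam / (T * γ ^ 2) := by
      rw [hR]
      field_simp
    rw [h4] at h1
    exact h1
  -- per-step descent inequality
  have hstep : ∀ t : Fin T,
      ‖w ((t : ℕ) + 1) - u‖ ^ 2 ≤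
        ‖w (t : ℕ) - u‖ ^ 2 - η (t : ℕ) * ℓ (t : ℕ) + 2 * (η (t : ℕ) * ℓu (t : ℕ)) := by
    intro t
    have hr := hrec t
    rw [hgrad t] at hr
    rw [hr]
    exact descent_step (w (t : ℕ)) u (g (t : ℕ)) lam (ℓ (t : ℕ)) (ℓu (t : ℕ)) hlam
      (lossPR_convex φ (x t) (ystar (x t)) (y (t : ℕ)) (w (t : ℕ)) u)
      (hgnorm (t : ℕ)) (hℓ0 (t : ℕ))
  -- telescoping
  have htel : ∀ n : ℕ, n ≤ T →
      ‖w n - u‖ ^ 2 + ∑ t ∈ Finset.range n, η t * ℓ t ≤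
        ‖w 0 - u‖ ^ 2 + 2 * ∑ t ∈ Finset.range n, η t * ℓu t := by
    intro n
    induction n with
    | zero => intro _; simp
    | succ m ih =>
        intro hm
        have hmT : m < T := hm
        have ihm := ih (le_of_lt hmT)
        have hs := hstep ⟨m, hmT⟩
        simp only [Fin.val_mk] at hs
        rw [Finset.sum_range_succ, Finset.sum_range_succ]
        linarith [ihm, hs]
  have hmain := htel T (le_refl T)
  have hw0u : ‖w 0 - u‖ ^ 2 ≤ 4 * L ^ 2 / γ ^ 2 := by
    have h1 : ‖w 0 - u‖ ≤ ‖w 0‖ + ‖u‖ := norm_sub_le _ _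
    have h2 : ‖w 0‖ + ‖u‖ ≤ 2 * L / γ := by
      rw [hunorm]
      have h := hw0
      have hxy : γ⁻¹ * L = L / γ := by ring
      have h2xy : 2 * L / γ = 2 * (L / γ) := by ring
      linarith
    have h3 : ‖w 0 - u‖ ^ 2 ≤ (2 * L / γ) ^ 2 := by
      apply pow_le_pow_left₀ (norm_nonneg _) (le_trans h1 h2)
    calc ‖w 0 - u‖ ^ 2 ≤ (2 * L / γ) ^ 2 := h3
      _ = 4 * L ^ 2 / γ ^ 2 := by ring
  have hsumu : ∑ t ∈ Finset.range T, η t * ℓu t ≤ 1 / (2 * γ ^ 2) := by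
    calc ∑ t ∈ Finset.range T, η t * ℓu t
        ≤ ∑ t ∈ Finset.range T, (2 * lam)⁻¹ * (lam / (T * γ ^ 2)) := by
          apply Finset.sum_le_sum
          intro t ht
          have htT : t < T := Finset.mem_range.1 ht
          have hη' : η t ≤ (2 * lam)⁻¹ := by
            apply inv_anti₀ (by linarith)
            have := norm_nonneg (g t)
            linarith
          have := hcomp ⟨t, htT⟩
          simp only [Fin.val_mk] at this
          apply mul_le_mul hη' this (hℓu0 t) (by positivity)
        _ = T * ((2 * lam)⁻¹ * (lam / (T * γ ^ 2))) := by
          rw [Finset.sum_const, Finset.card_range, nsmul_eq_mul]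
        _ = 1 / (2 * γ ^ 2) := by
          field_simp
  -- sum of η ℓ bound
  have hsumℓ : ∑ t ∈ Finset.range T, η t * ℓ t ≤ 5 * L ^ 2 / γ ^ 2 := by
    have hnn : 0 ≤ ‖w T - u‖ ^ 2 := sq_nonneg _
    have h1 : 1 ≤ L ^ 2 := by nlinarith
    calc ∑ t ∈ Finset.range T, η t * ℓ t
        ≤ ‖w 0 - u‖ ^ 2 + 2 * ∑ t ∈ Finset.range T, η t * ℓu t := by linarith [hmain, hnn]
      _ ≤ 4 * L ^ 2 / γ ^ 2 + 2 * (1 / (2 * γ ^ 2)) := by linarith [hw0u, hsumu]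
      _ = (4 * L ^ 2 + 1) / γ ^ 2 := by
          field_simp
      _ ≤ 5 * L ^ 2 / γ ^ 2 := by
          apply (div_le_div_iff_of_pos_right (by positivity : (0:ℝ) < γ ^ 2)).2
          nlinarith
  -- termwise bound and conclusion
  have hterm : ∀ t : Fin T,
      (if pref (y (t : ℕ)) i = pref (ystar (x t)) i then (1:ℝ) else 0) *
          min (lam / 2) (- Real.log (pPre φ (w (t : ℕ)) (x t) (ystar (x t)) i)) ≤
        4 * lam * (η (t : ℕ) * ℓ (t : ℕ)) := by
    intro t
    by_cases hc : pref (y (t : ℕ)) i = pref (ystar (x t)) i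
    · rw [if_pos hc, one_mul]
      apply min_le_eta_mul hlam
        (neg_log_pPre_nonneg φ (x t) (ystar (x t)) (w (t : ℕ)) i)
        (neg_log_pPre_le_lossPR φ (x t) (ystar (x t)) (y (t : ℕ)) (w (t : ℕ)) i hc)
        (norm_nonneg _) (hgnorm (t : ℕ))
    · rw [if_neg hc, zero_mul]
      have h5 := mul_nonneg (hη0 (t : ℕ)) (hℓ0 (t : ℕ))
      have h4 : (0:ℝ) ≤ 4 * lam := by linarith
      exact mul_nonneg h4 h5
  calc ∑ t : Fin T, ((if pref (y (t : ℕ)) i = pref (ystar (x t)) i then (1:ℝ) else 0) *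
        min (lam / 2) (- Real.log (pPre φ (w (t : ℕ)) (x t) (ystar (x t)) i)))
      ≤ ∑ t : Fin T, 4 * lam * (η (t : ℕ) * ℓ (t : ℕ)) :=
        Finset.sum_le_sum (fun t _ => hterm t)
    _ = 4 * lam * ∑ t ∈ Finset.range T, η t * ℓ t := by
        rw [Finset.mul_sum, ← Fin.sum_univ_eq_sum_range]
    _ ≤ 4 * lam * (5 * L ^ 2 / γ ^ 2) := by
        apply mul_le_mul_of_nonneg_left hsumℓ (by positivity)
    _ = 20 * lam * L ^ 2 / γ ^ 2 := by ring

end Pathwise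

section Prob
variable {Ω : Type*} [MeasurableSpace Ω] {k N : ℕ}

/-- the event that the first `n` draws equal `h` -/
def atomSet (Y : ℕ → Ω → (Fin N → Fin k)) (n : ℕ) (h : Fin n → (Fin N → Fin k)) : Set Ω :=
  {ω | ∀ s : Fin n, Y (s : ℕ) ω = h s}

lemma atomSet_measurable (Y : ℕ → Ω → (Fin N → Fin k)) (hYm : ∀ t, Measurable (Y t))
    (n : ℕ) (h : Fin n → (Fin N → Fin k)) : MeasurableSet (atomSet Y n h) := by
  have : atomSet Y n h = ⋂ s : Fin n, ⋂ j : Fin N, {ω | Y (s : ℕ) ω j = h s j} := by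
    ext ω
    simp only [atomSet, Set.mem_setOf_eq, Set.mem_iInter]
    constructor
    · intro hh s j; rw [hh s]
    · intro hh s; funext j; exact hh s j
  rw [this]
  apply MeasurableSet.iInter
  intro s
  apply MeasurableSet.iInter
  intro j
  exact ((measurable_pi_apply j).comp (hYm (s : ℕ))) (measurableSet_singleton (h s j))

variable (P : Measure Ω) [IsProbabilityMeasure P]

lemma comp_hist_eq_sum_indicator (Y : ℕ → Ω → (Fin N → Fin k)) (n : ℕ)
    (F : (Fin n → (Fin N → Fin k)) → ℝ) :
    (fun ω => F (fun s : Fin n => Y (s : ℕ) ω)) =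
      fun ω => ∑ h : Fin n → (Fin N → Fin k),
        Set.indicator (atomSet Y n h) (fun _ => F h) ω := by
  funext ω
  rw [Finset.sum_eq_single (fun s : Fin n => Y (s : ℕ) ω)]
  · rw [Set.indicator_of_mem]
    intro s; rfl
  · intro h _ hne
    rw [Set.indicator_of_notMem]
    intro hmem
    exact hne (funext fun s => (hmem s).symm)
  · intro hno
    exact absurd (Finset.mem_univ _) hno

lemma integrable_comp_hist (Y : ℕ → Ω → (Fin N → Fin k)) (hYm : ∀ t, Measurable (Y t))
    (n : ℕ) (F : (Fin n → (Fin N → Fin k)) → ℝ) :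
    Integrable (fun ω => F (fun s : Fin n => Y (s : ℕ) ω)) P := by
  rw [comp_hist_eq_sum_indicator]
  apply integrable_finset_sum
  intro h _
  exact (integrable_const (F h)).indicator (atomSet_measurable Y hYm n h)

lemma integral_comp_hist (Y : ℕ → Ω → (Fin N → Fin k)) (hYm : ∀ t, Measurable (Y t))
    (n : ℕ) (F : (Fin n → (Fin N → Fin k)) → ℝ) :
    ∫ ω, F (fun s : Fin n => Y (s : ℕ) ω) ∂P =
      ∑ h : Fin n → (Fin N → Fin k), F h * (P (atomSet Y n h)).toReal := by
  rw [comp_hist_eq_sum_indicator Y n F, integral_finset_sum]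
  · apply Finset.sum_congr rfl
    intro h _
    rw [integral_indicator_const _ (atomSet_measurable Y hYm n h), smul_eq_mul, mul_comm]
    rfl
  · intro h _
    exact (integrable_const (F h)).indicator (atomSet_measurable Y hYm n h)

/-- snoc equivalence -/
def snocEquiv (n : ℕ) (V : Type*) : ((Fin n → V) × V) ≃ (Fin (n + 1) → V) where
  toFun p := Fin.snoc p.1 p.2
  invFun h := (fun s => h s.castSucc, h (Fin.last n))
  left_inv p := by
    ext s
    · simp
    · simp
  right_inv h := by
    funext s
    induction s using Fin.lastCases with
    | last => simp
    | cast s => simp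

lemma atomSet_succ (Y : ℕ → Ω → (Fin N → Fin k)) (n : ℕ)
    (h : Fin n → (Fin N → Fin k)) (z : Fin N → Fin k) :
    atomSet Y (n + 1) (Fin.snoc h z) =
      {ω | (∀ s : Fin n, Y (s : ℕ) ω = h s) ∧ Y n ω = z} := by
  ext ω
  simp only [atomSet, Set.mem_setOf_eq]
  constructor
  · intro hh
    constructor
    · intro s
      have := hh s.castSucc
      rwa [Fin.snoc_castSucc, Fin.coe_castSucc] at this
    · have := hh (Fin.last n)
      rwa [Fin.snoc_last, Fin.val_last] at this
  · rintro ⟨h1, h2⟩ s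
    induction s using Fin.lastCases with
    | last => rwa [Fin.snoc_last, Fin.val_last]
    | cast s => rw [Fin.snoc_castSucc, Fin.coe_castSucc]; exact h1 s

lemma swapIntegralQ (Y : ℕ → Ω → (Fin N → Fin k)) (hYm : ∀ t, Measurable (Y t))
    (t : ℕ) (q : (Fin t → (Fin N → Fin k)) → (Fin N → Fin k) → ℝ)
    (hq0 : ∀ h y, 0 ≤ q h y)
    (hlaw : ∀ (h : Fin t → (Fin N → Fin k)) (z : Fin N → Fin k),
      P {ω | (∀ s : Fin t, Y (s : ℕ) ω = h s) ∧ Y t ω = z} =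
        ENNReal.ofReal (q h z) * P {ω | ∀ s : Fin t, Y (s : ℕ) ω = h s})
    (F : (Fin t → (Fin N → Fin k)) → ℝ) (S : Finset (Fin N → Fin k)) :
    ∫ ω, (if Y t ω ∈ S then (1:ℝ) else 0) * F (fun s : Fin t => Y (s : ℕ) ω) ∂P =
      ∫ ω, (∑ z ∈ S, q (fun s : Fin t => Y (s : ℕ) ω) z) *
        F (fun s : Fin t => Y (s : ℕ) ω) ∂P := by
  have hLHS : (fun ω => (if Y t ω ∈ S then (1:ℝ) else 0) * F (fun s : Fin t => Y (s : ℕ) ω))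
      = fun ω => (fun h' : Fin (t+1) → (Fin N → Fin k) =>
          (if h' (Fin.last t) ∈ S then (1:ℝ) else 0) * F (fun s : Fin t => h' s.castSucc))
        (fun s : Fin (t+1) => Y (s : ℕ) ω) := by
    funext ω
    simp only [Fin.coe_castSucc, Fin.val_last]
  rw [hLHS, integral_comp_hist P Y hYm (t+1)
      (fun h' : Fin (t+1) → (Fin N → Fin k) =>
        (if h' (Fin.last t) ∈ S then (1:ℝ) else 0) * F (fun s : Fin t => h' s.castSucc)),
    show (∫ ω, (∑ z ∈ S, q (fun s : Fin t => Y (s : ℕ) ω) z) *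
        F (fun s : Fin t => Y (s : ℕ) ω) ∂P) =
      ∫ ω, (fun h : Fin t → (Fin N → Fin k) => (∑ z ∈ S, q h z) * F h)
        (fun s : Fin t => Y (s : ℕ) ω) ∂P from rfl,
    integral_comp_hist P Y hYm t (fun h : Fin t → (Fin N → Fin k) => (∑ z ∈ S, q h z) * F h)]
  rw [← Equiv.sum_comp (snocEquiv t (Fin N → Fin k))]
  rw [Fintype.sum_prod_type]
  apply Finset.sum_congr rfl
  intro h _
  have hP : ∀ z, (P (atomSet Y (t+1) (Fin.snoc h z))).toReal
      = q h z * (P (atomSet Y t h)).toReal := by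
    intro z
    rw [atomSet_succ, hlaw h z, ENNReal.toReal_mul, ENNReal.toReal_ofReal (hq0 h z)]
    rfl
  calc ∑ z : Fin N → Fin k,
        (if (snocEquiv t (Fin N → Fin k) (h, z)) (Fin.last t) ∈ S then (1:ℝ) else 0) *
          F (fun s : Fin t => (snocEquiv t (Fin N → Fin k) (h, z)) s.castSucc) *
          (P (atomSet Y (t+1) (snocEquiv t (Fin N → Fin k) (h, z)))).toReal
      = ∑ z : Fin N → Fin k, (if z ∈ S then (1:ℝ) else 0) *
          (F h * (q h z * (P (atomSet Y t h)).toReal)) := by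
        apply Finset.sum_congr rfl
        intro z _
        have h1 : (snocEquiv t (Fin N → Fin k) (h, z)) (Fin.last t) = z := by
          simp [snocEquiv]
        have h2 : (fun s : Fin t => (snocEquiv t (Fin N → Fin k) (h, z)) s.castSucc) = h := by
          funext s; simp [snocEquiv]
        rw [h1, h2, show snocEquiv t (Fin N → Fin k) (h, z) = Fin.snoc h z from rfl, hP z]
        ring
    _ = (∑ z ∈ S, q h z) * F h * (P (atomSet Y t h)).toReal := by
        simp only [ite_mul, one_mul, zero_mul]
        rw [Finset.sum_ite_mem, Finset.univ_inter, Finset.sum_mul, Finset.sum_mul]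
        apply Finset.sum_congr rfl
        intro z _
        ring

end Prob

section WFdef
variable {𝒳 : Type*} {D k N : ℕ}

/-- the PG-PR iterate as a function of the history of draws -/
def WF (φ : 𝒳 → List (Fin k) → EuclideanSpace ℝ (Fin D)) (x : ℕ → 𝒳)
    (ystar : 𝒳 → Fin N → Fin k) (lam : ℝ) (w0 : EuclideanSpace ℝ (Fin D)) :
    (t : ℕ) → (Fin t → (Fin N → Fin k)) → EuclideanSpace ℝ (Fin D)
  | 0, _ => w0
  | (t+1), h =>
      WF φ x ystar lam w0 t (fun s => h s.castSucc) -
        (2 * (lam + ‖gradient (lossPR φ (x t) (ystar (x t)) (h (Fin.last t)))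
            (WF φ x ystar lam w0 t (fun s => h s.castSucc))‖))⁻¹ •
          gradient (lossPR φ (x t) (ystar (x t)) (h (Fin.last t)))
            (WF φ x ystar lam w0 t (fun s => h s.castSucc))

end WFdef

end Aux

/-- (Proposition: online PG with process rewards and adaptive learning
rate `η_t = 1/(2(λ + ‖∇ℓ_t(w_t)‖))` on an arbitrary, possibly adversarial, sequence of
contexts satisfying the γ-margin inequalities with a common unit vector `w*`).  For every
prefix length `i ∈ [N]`, the expected average of
`q_t(y*_{1:i}(x^{(t)})|x^{(t)}) · min(λ/2, −log p_{w_t}(y*_{1:i}(x^{(t)})|x^{(t)}))` is at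
most `20 λ (log(N k T γ²/λ))² / (γ² T)`. -/
theorem pg_pr_adaptive_lr_online
    (𝒳 : Type) (D k N T : ℕ) (hk : 2 ≤ k) (hN : 1 ≤ N) (hD : 1 ≤ D) (hT : 1 ≤ T)
    (φ : 𝒳 → List (Fin k) → EuclideanSpace ℝ (Fin D))
    (x : ℕ → 𝒳) (ystar : 𝒳 → Fin N → Fin k) (γ lam : ℝ) (hγ : 0 < γ) (hlam : 0 < lam)
    (hmargin : ∃ wstar : EuclideanSpace ℝ (Fin D), ‖wstar‖ = 1 ∧
      ∀ t : Fin T, ∀ i : Fin N, ∀ a : Fin k, a ≠ ystar (x t) i →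
        ⟪wstar, φ (x t) (pref (ystar (x t)) ((i : ℕ) + 1))⟫ ≥
          ⟪wstar, φ (x t) (pref (ystar (x t)) (i : ℕ) ++ [a])⟫ + γ)
    (hφnorm : ∀ x' : 𝒳, ∀ l : List (Fin k), l ≠ [] → l.length ≤ N → ‖φ x' l‖ ≤ 1)
    (hscale : Real.exp 1 ≤ (N : ℝ) * k * T * γ ^ 2 / lam)
    -- behavior policies: arbitrary functions of the history of past draws
    (q : (t : ℕ) → (Fin t → (Fin N → Fin k)) → (Fin N → Fin k) → ℝ)
    (hq0 : ∀ t h y, 0 ≤ q t h y) (hq1 : ∀ t h, ∑ y : Fin N → Fin k, q t h y = 1)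
    (Ω : Type) [MeasurableSpace Ω] (P : Measure Ω) [IsProbabilityMeasure P]
    (Y : ℕ → Ω → (Fin N → Fin k)) (hYm : ∀ t, Measurable (Y t))
    (hYlaw : ∀ t < T, ∀ (h : Fin t → (Fin N → Fin k)) (y : Fin N → Fin k),
      P {ω | (∀ s : Fin t, Y s ω = h s) ∧ Y t ω = y} =
        ENNReal.ofReal (q t h y) * P {ω | ∀ s : Fin t, Y s ω = h s})
    -- PG-PR iterates
    (w0 : EuclideanSpace ℝ (Fin D))
    (hw0 : ‖w0‖ ≤ γ⁻¹ * Real.log ((N : ℝ) * k * T * γ ^ 2 / lam))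
    (W : Ω → ℕ → EuclideanSpace ℝ (Fin D))
    (hW0 : ∀ ω, W ω 0 = w0)
    (hWrec : ∀ ω, ∀ t : Fin T,
      W ω ((t : ℕ) + 1) = W ω (t : ℕ) -
        (2 * (lam + ‖gradient (lossPR φ (x t) (ystar (x t)) (Y t ω)) (W ω (t : ℕ))‖))⁻¹ •
          gradient (lossPR φ (x t) (ystar (x t)) (Y t ω)) (W ω (t : ℕ))) :
    ∀ i : ℕ, 1 ≤ i → i ≤ N →
      ∫ ω, (1 / (T : ℝ)) * ∑ t : Fin T,
          ((∑ y : Fin N → Fin k,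
              if pref y i = pref (ystar (x t)) i
              then q (t : ℕ) (fun s : Fin (t : ℕ) => Y s ω) y else 0) *
            min (lam / 2) (- Real.log (pPre φ (W ω (t : ℕ)) (x t) (ystar (x t)) i))) ∂P ≤
        20 * lam * (Real.log ((N : ℝ) * k * T * γ ^ 2 / lam)) ^ 2 / (γ ^ 2 * T) := by
  intro i hi1 hiN
  obtain ⟨wstar, hws, hmar⟩ := hmargin
  haveI : NeZero k := ⟨by omega⟩
  have hT0 : (0:ℝ) < T := by exact_mod_cast Nat.lt_of_lt_of_le Nat.zero_lt_one hT
  set L : ℝ := Real.log ((N : ℝ) * k * T * γ ^ 2 / lam) with hLdef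
  set B : ℝ := 20 * lam * L ^ 2 / (γ ^ 2 * T) with hBdef
  -- step 0 : iterates are functions of the history
  have hWFeq : ∀ (t : ℕ), t ≤ T → ∀ ω,
      W ω t = WF φ x ystar lam w0 t (fun s : Fin t => Y (s : ℕ) ω) := by
    intro t
    induction t with
    | zero => intro _ ω; rw [hW0]; rfl
    | succ m ih =>
        intro hm ω
        have hmT : m < T := hm
        have hr := hWrec ω ⟨m, hmT⟩
        simp only [Fin.val_mk] at hr
        rw [hr, ih (le_of_lt hmT) ω]
        rfl
  -- step 1 : pathwise deterministic bound
  have hpath : ∀ ω, (1 / (T : ℝ)) * ∑ t : Fin T,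
      ((if pref (Y (t : ℕ) ω) i = pref (ystar (x t)) i then (1:ℝ) else 0) *
        min (lam / 2) (- Real.log (pPre φ (W ω (t : ℕ)) (x t) (ystar (x t)) i))) ≤ B := by
    intro ω
    have h := pathwise_bound φ x ystar γ lam hγ hlam hN hk hT wstar hws hmar hφnorm hscale
      (fun t => Y t ω) (W ω) (by rw [hW0]; exact hw0) (hWrec ω) i hi1 hiN
    calc (1 / (T : ℝ)) * ∑ t : Fin T,
        ((if pref (Y (t : ℕ) ω) i = pref (ystar (x t)) i then (1:ℝ) else 0) *
          min (lam / 2) (- Real.log (pPre φ (W ω (t : ℕ)) (x t) (ystar (x t)) i)))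
        ≤ (1 / (T : ℝ)) * (20 * lam * L ^ 2 / γ ^ 2) := by
          apply mul_le_mul_of_nonneg_left h (by positivity)
      _ = B := by rw [hBdef, one_div, inv_mul_eq_div, div_div]
  -- abbreviations
  set MW : (t : ℕ) → (Fin t → (Fin N → Fin k)) → ℝ := fun t h =>
    min (lam / 2) (- Real.log (pPre φ (WF φ x ystar lam w0 t h) (x t) (ystar (x t)) i))
    with hMW
  set St : ℕ → Finset (Fin N → Fin k) := fun t =>
    Finset.univ.filter (fun z => pref z i = pref (ystar (x t)) i) with hSt
  -- rewrite of LHS integrand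
  have hLHSfun : (fun ω => (1 / (T : ℝ)) * ∑ t : Fin T,
      ((∑ z : Fin N → Fin k,
          if pref z i = pref (ystar (x t)) i
          then q (t : ℕ) (fun s : Fin (t : ℕ) => Y (s : ℕ) ω) z else 0) *
        min (lam / 2) (- Real.log (pPre φ (W ω (t : ℕ)) (x t) (ystar (x t)) i))))
      = fun ω => (1 / (T : ℝ)) * ∑ t : Fin T,
        (fun h => (∑ z ∈ St (t : ℕ), q (t : ℕ) h z) * MW (t : ℕ) h)
          (fun s : Fin (t : ℕ) => Y (s : ℕ) ω) := by
    funext ω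
    congr 1
    apply Finset.sum_congr rfl
    intro t _
    rw [hWFeq (t : ℕ) (le_of_lt t.isLt) ω]
    congr 1
    rw [hSt]
    rw [Finset.sum_filter]
  -- rewrite of the indicator integrand
  have hINDfun : ∀ t : Fin T, (fun ω =>
      (if Y (t : ℕ) ω ∈ St (t : ℕ) then (1:ℝ) else 0) *
        MW (t : ℕ) (fun s : Fin (t : ℕ) => Y (s : ℕ) ω))
      = fun ω => (fun h' : Fin ((t : ℕ)+1) → (Fin N → Fin k) =>
          (if h' (Fin.last (t : ℕ)) ∈ St (t : ℕ) then (1:ℝ) else 0) *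
            MW (t : ℕ) (fun s : Fin (t : ℕ) => h' s.castSucc))
        (fun s : Fin ((t : ℕ)+1) => Y (s : ℕ) ω) := by
    intro t
    funext ω
    simp only [Fin.coe_castSucc, Fin.val_last]
  -- the integral computation
  calc ∫ ω, (1 / (T : ℝ)) * ∑ t : Fin T,
        ((∑ z : Fin N → Fin k,
            if pref z i = pref (ystar (x t)) i
            then q (t : ℕ) (fun s : Fin (t : ℕ) => Y (s : ℕ) ω) z else 0) *
          min (lam / 2) (- Real.log (pPre φ (W ω (t : ℕ)) (x t) (ystar (x t)) i))) ∂P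
      = (1 / (T : ℝ)) * ∑ t : Fin T, ∫ ω,
          (fun h => (∑ z ∈ St (t : ℕ), q (t : ℕ) h z) * MW (t : ℕ) h)
            (fun s : Fin (t : ℕ) => Y (s : ℕ) ω) ∂P := by
        rw [hLHSfun, integral_const_mul, integral_finset_sum]
        intro t _
        exact integrable_comp_hist P Y hYm (t : ℕ)
          (fun h => (∑ z ∈ St (t : ℕ), q (t : ℕ) h z) * MW (t : ℕ) h)
    _ = (1 / (T : ℝ)) * ∑ t : Fin T, ∫ ω,
          (if Y (t : ℕ) ω ∈ St (t : ℕ) then (1:ℝ) else 0) *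
            MW (t : ℕ) (fun s : Fin (t : ℕ) => Y (s : ℕ) ω) ∂P := by
        congr 1
        apply Finset.sum_congr rfl
        intro t _
        exact (swapIntegralQ P Y hYm (t : ℕ) (q (t : ℕ)) (hq0 (t : ℕ))
          (hYlaw (t : ℕ) t.isLt) (MW (t : ℕ)) (St (t : ℕ))).symm
    _ = ∫ ω, (1 / (T : ℝ)) * ∑ t : Fin T,
          ((if Y (t : ℕ) ω ∈ St (t : ℕ) then (1:ℝ) else 0) *
            MW (t : ℕ) (fun s : Fin (t : ℕ) => Y (s : ℕ) ω)) ∂P := by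
        rw [integral_const_mul, integral_finset_sum]
        intro t _
        rw [hINDfun t]
        exact integrable_comp_hist P Y hYm ((t : ℕ)+1)
          (fun h' : Fin ((t : ℕ)+1) → (Fin N → Fin k) =>
            (if h' (Fin.last (t : ℕ)) ∈ St (t : ℕ) then (1:ℝ) else 0) *
              MW (t : ℕ) (fun s : Fin (t : ℕ) => h' s.castSucc))
    _ ≤ ∫ ω, B ∂P := by
        apply integral_mono
        · apply Integrable.const_mul
          apply integrable_finset_sum
          intro t _
          rw [hINDfun t]
          exact integrable_comp_hist P Y hYm ((t : ℕ)+1)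
            (fun h' : Fin ((t : ℕ)+1) → (Fin N → Fin k) =>
              (if h' (Fin.last (t : ℕ)) ∈ St (t : ℕ) then (1:ℝ) else 0) *
                MW (t : ℕ) (fun s : Fin (t : ℕ) => h' s.castSucc))
        · exact integrable_const B
        · intro ω
          have h := hpath ω
          calc (1 / (T : ℝ)) * ∑ t : Fin T,
              ((if Y (t : ℕ) ω ∈ St (t : ℕ) then (1:ℝ) else 0) *
                MW (t : ℕ) (fun s : Fin (t : ℕ) => Y (s : ℕ) ω))
              = (1 / (T : ℝ)) * ∑ t : Fin T,
                ((if pref (Y (t : ℕ) ω) i = pref (ystar (x t)) i then (1:ℝ) else 0) *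
                  min (lam / 2)
                    (- Real.log (pPre φ (W ω (t : ℕ)) (x t) (ystar (x t)) i))) := by
                congr 1
                apply Finset.sum_congr rfl
                intro t _
                rw [hWFeq (t : ℕ) (le_of_lt t.isLt) ω]
                congr 1
                rw [hSt]
                simp [Finset.mem_filter]
            _ ≤ B := hpath ω
    _ = B := by
        simp [integral_const]
end
end

section
/- Suppose ‖φ(x, y_{1:i})‖₂ ≤ R for all x ∈ 𝒳 and all y_{1:i} ∈ 𝒴⁺, where R > 0. Then for every w ∈ ℝ^D, x ∈ 𝒳, y ∈ 𝒴^N, and i ∈ [N], ‖∇_w log p_w(y_i | x, y_{1:i-1})‖₂ ≤ −2R log p_w(y_i | x, y_{1:i-1}); consequently, by the triangle inequality, ‖∇_w log p_w(y | x)‖₂ ≤ −2R log p_w(y | x). -/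
open scoped BigOperators RealInnerProductSpace

noncomputable section

/-- Sequence-level autoregressive probability `p_w(y | x) = ∏_i p_w(y_i | x, y_{1:i-1})`. -/
def pSeq {𝒳 : Type*} {D k N : ℕ} (φ : 𝒳 → List (Fin k) → EuclideanSpace ℝ (Fin D))
    (w : EuclideanSpace ℝ (Fin D)) (x : 𝒳) (y : Fin N → Fin k) : ℝ :=
  ∏ i : Fin N, pTok φ w x (pref y i) (y i)


section aux

variable {D k : ℕ}

lemma sum_exp_pos [NeZero k] (v : Fin k → EuclideanSpace ℝ (Fin D))
    (w : EuclideanSpace ℝ (Fin D)) :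
    0 < ∑ b : Fin k, Real.exp ⟪w, v b⟫ :=
  Finset.sum_pos (fun _ _ => Real.exp_pos _) Finset.univ_nonempty

lemma inner_hasFDerivAt (u w : EuclideanSpace ℝ (Fin D)) :
    HasFDerivAt (fun w' : EuclideanSpace ℝ (Fin D) => ⟪w', u⟫) (innerSL ℝ u) w := by
  have h := (innerSL ℝ (E := EuclideanSpace ℝ (Fin D)) u).hasFDerivAt (x := w)
  have : (fun w' : EuclideanSpace ℝ (Fin D) => ⟪w', u⟫) = fun w' => innerSL ℝ u w' := by
    funext w'; simp only [innerSL_apply_apply]; exact real_inner_comm _ _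
  rw [this]
  exact h

lemma softmax_hasGradientAt [NeZero k] (v : Fin k → EuclideanSpace ℝ (Fin D)) (a : Fin k)
    (w : EuclideanSpace ℝ (Fin D)) :
    HasGradientAt
      (fun w' => Real.log (Real.exp ⟪w', v a⟫ / ∑ b : Fin k, Real.exp ⟪w', v b⟫))
      (∑ b : Fin k,
        (Real.exp ⟪w, v b⟫ / ∑ c : Fin k, Real.exp ⟪w, v c⟫) • (v a - v b)) w := by
  have hS := sum_exp_pos v
  have hfun : (fun w' => Real.log (Real.exp ⟪w', v a⟫ / ∑ b : Fin k, Real.exp ⟪w', v b⟫))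
      = fun w' => ⟪w', v a⟫ - Real.log (∑ b : Fin k, Real.exp ⟪w', v b⟫) := by
    funext w'
    rw [Real.log_div (Real.exp_ne_zero _) (hS w').ne', Real.log_exp]
  rw [hfun]
  set S : ℝ := ∑ b : Fin k, Real.exp ⟪w, v b⟫ with hSdef
  have h2 : HasFDerivAt (fun w' : EuclideanSpace ℝ (Fin D) => ∑ b : Fin k, Real.exp ⟪w', v b⟫)
      (∑ b : Fin k, Real.exp ⟪w, v b⟫ • innerSL ℝ (v b)) w :=
    HasFDerivAt.fun_sum fun b _ => (inner_hasFDerivAt (v b) w).exp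
  have h3 := h2.log (hS w).ne'
  have h4 := (inner_hasFDerivAt (v a) w).sub h3
  rw [hasGradientAt_iff_hasFDerivAt]
  refine h4.congr_fderiv (Eq.symm ?_)
  ext u
  simp only [InnerProductSpace.toDual_apply_apply, ContinuousLinearMap.sub_apply,
    ContinuousLinearMap.smul_apply, ContinuousLinearMap.coe_sum', Finset.sum_apply,
    innerSL_apply_apply, sum_inner, inner_sum, inner_smul_left, inner_sub_left, real_inner_smul_left,
    smul_eq_mul, RCLike.star_def, conj_trivial]
  have h1 : ∑ b : Fin k, Real.exp ⟪w, v b⟫ / S = 1 := by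
    rw [← Finset.sum_div, ← hSdef, div_self (hS w).ne']
  calc ∑ b : Fin k, Real.exp ⟪w, v b⟫ / S * (⟪v a, u⟫ - ⟪v b, u⟫)
      = (∑ b : Fin k, Real.exp ⟪w, v b⟫ / S) * ⟪v a, u⟫
        - S⁻¹ * ∑ b : Fin k, Real.exp ⟪w, v b⟫ * ⟪v b, u⟫ := by
        rw [Finset.sum_mul, Finset.mul_sum, ← Finset.sum_sub_distrib]
        congr 1; funext b; ring
    _ = ⟪v a, u⟫ - S⁻¹ * ∑ b : Fin k, Real.exp ⟪w, v b⟫ * ⟪v b, u⟫ := by rw [h1, one_mul]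

lemma softmax_grad_norm_bound [NeZero k] (v : Fin k → EuclideanSpace ℝ (Fin D)) (a : Fin k)
    (w : EuclideanSpace ℝ (Fin D)) (R : ℝ) (hv : ∀ b, ‖v b‖ ≤ R) :
    ‖∑ b : Fin k, (Real.exp ⟪w, v b⟫ / ∑ c : Fin k, Real.exp ⟪w, v c⟫) • (v a - v b)‖
      ≤ -2 * R * Real.log (Real.exp ⟪w, v a⟫ / ∑ c : Fin k, Real.exp ⟪w, v c⟫) := by
  have hS := sum_exp_pos v w
  set p : Fin k → ℝ := fun b => Real.exp ⟪w, v b⟫ / ∑ c : Fin k, Real.exp ⟪w, v c⟫ with hp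
  have hppos : ∀ b, 0 < p b := fun b => div_pos (Real.exp_pos _) hS
  have hpsum : ∑ b : Fin k, p b = 1 := by
    rw [hp, ← Finset.sum_div, div_self hS.ne']
  have h1 : ‖∑ b : Fin k, p b • (v a - v b)‖ ≤ ∑ b : Fin k, p b * ‖v a - v b‖ := by
    refine (norm_sum_le _ _).trans (le_of_eq ?_)
    congr 1; funext b
    rw [norm_smul, Real.norm_eq_abs, abs_of_pos (hppos b)]
  have h2 : ∑ b : Fin k, p b * ‖v a - v b‖ ≤ ∑ b : Fin k, (if b = a then 0 else p b * (2 * R)) := by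
    refine Finset.sum_le_sum fun b _ => ?_
    by_cases hb : b = a
    · simp [hb]
    · simp only [if_neg hb]
      refine mul_le_mul_of_nonneg_left ?_ (hppos b).le
      calc ‖v a - v b‖ ≤ ‖v a‖ + ‖v b‖ := norm_sub_le _ _
        _ ≤ R + R := add_le_add (hv a) (hv b)
        _ = 2 * R := by ring
  have h3 : ∑ b : Fin k, (if b = a then 0 else p b * (2 * R)) = (1 - p a) * (2 * R) := by
    rw [← Finset.sum_erase_add _ _ (Finset.mem_univ a), if_pos rfl, add_zero,
      Finset.sum_congr rfl (fun b hb => if_neg (Finset.ne_of_mem_erase hb)),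
      ← Finset.sum_mul, Finset.sum_erase_eq_sub (Finset.mem_univ a), hpsum]
  have hR0 : 0 ≤ R := (norm_nonneg (v a)).trans (hv a)
  have hpa1 : p a ≤ 1 := by
    rw [← hpsum]
    exact Finset.single_le_sum (fun b _ => (hppos b).le) (Finset.mem_univ a)
  have hlog : 1 - p a ≤ -Real.log (p a) := by
    have := Real.log_le_sub_one_of_pos (hppos a)
    linarith
  calc ‖∑ b : Fin k, p b • (v a - v b)‖
      ≤ (1 - p a) * (2 * R) := by rw [← h3]; exact h1.trans h2
    _ ≤ (-Real.log (p a)) * (2 * R) := by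
        apply mul_le_mul_of_nonneg_right hlog (by linarith)
    _ = -2 * R * Real.log (p a) := by ring

end aux


/-- Lemma: self-bounding property of the log-likelihood gradient.
If `‖φ(x, y_{1:i})‖ ≤ R` for all contexts and all nonempty prefixes of length at most `N`,
then for every `w`, `x`, `y` and token position `i`,
`‖∇_w log p_w(y_i | x, y_{1:i-1})‖ ≤ −2R · log p_w(y_i | x, y_{1:i-1})`, and consequently
`‖∇_w log p_w(y | x)‖ ≤ −2R · log p_w(y | x)`. -/
theorem grad_log_likelihood_bound
    (𝒳 : Type) (D k N : ℕ) (hk : 2 ≤ k) (hN : 1 ≤ N)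
    (φ : 𝒳 → List (Fin k) → EuclideanSpace ℝ (Fin D))
    (R : ℝ) (hR : 0 < R)
    (hφ : ∀ x : 𝒳, ∀ l : List (Fin k), l ≠ [] → l.length ≤ N → ‖φ x l‖ ≤ R)
    (w : EuclideanSpace ℝ (Fin D)) (x : 𝒳) (y : Fin N → Fin k) :
    (∀ i : Fin N,
      ‖gradient (fun w' => Real.log (pTok φ w' x (pref y i) (y i))) w‖ ≤
        -2 * R * Real.log (pTok φ w x (pref y i) (y i))) ∧
    ‖gradient (fun w' => Real.log (pSeq φ w' x y)) w‖ ≤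
      -2 * R * Real.log (pSeq φ w x y) := by
  haveI : NeZero k := ⟨by omega⟩
  set v : Fin N → Fin k → EuclideanSpace ℝ (Fin D) :=
    fun i b => φ x (pref y i ++ [b]) with hv
  have hvR : ∀ (i : Fin N) (b : Fin k), ‖v i b‖ ≤ R := by
    intro i b
    apply hφ
    · simp
    · have hlen : (pref y (i : ℕ)).length = i := by
        simp [pref, min_eq_left i.isLt.le]
      simp only [List.length_append, hlen, List.length_singleton]
      omega
  set g : Fin N → EuclideanSpace ℝ (Fin D) := fun i =>
    ∑ b : Fin k,
      (Real.exp ⟪w, v i b⟫ / ∑ c : Fin k, Real.exp ⟪w, v i c⟫) • (v i (y i) - v i b) with hg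
  have htok : ∀ i : Fin N,
      HasGradientAt (fun w' => Real.log (pTok φ w' x (pref y i) (y i))) (g i) w :=
    fun i => softmax_hasGradientAt (v i) (y i) w
  have hbd : ∀ i : Fin N, ‖g i‖ ≤ -2 * R * Real.log (pTok φ w x (pref y i) (y i)) :=
    fun i => softmax_grad_norm_bound (v i) (y i) w R (hvR i)
  have hpos : ∀ (w' : EuclideanSpace ℝ (Fin D)) (i : Fin N),
      0 < pTok φ w' x (pref y i) (y i) :=
    fun w' i => div_pos (Real.exp_pos _) (sum_exp_pos (v i) w')
  constructor
  · intro i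
    rw [(htok i).gradient]
    exact hbd i
  · have hfun : (fun w' => Real.log (pSeq φ w' x y))
        = fun w' => ∑ i : Fin N, Real.log (pTok φ w' x (pref y i) (y i)) := by
      funext w'
      rw [pSeq, Real.log_prod]
      exact fun i _ => (hpos w' i).ne'
    have hsum : HasGradientAt
        (fun w' => ∑ i : Fin N, Real.log (pTok φ w' x (pref y i) (y i)))
        (∑ i : Fin N, g i) w := by
      rw [hasGradientAt_iff_hasFDerivAt]
      have h := HasFDerivAt.fun_sum fun (i : Fin N) (_ : i ∈ Finset.univ) =>
        (htok i).hasFDerivAt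
      refine h.congr_fderiv (Eq.symm ?_)
      exact map_sum (InnerProductSpace.toDual ℝ (EuclideanSpace ℝ (Fin D))) _ _
    rw [hfun, hsum.gradient]
    calc ‖∑ i : Fin N, g i‖ ≤ ∑ i : Fin N, ‖g i‖ := norm_sum_le _ _
      _ ≤ ∑ i : Fin N, -2 * R * Real.log (pTok φ w x (pref y i) (y i)) :=
          Finset.sum_le_sum fun i _ => hbd i
      _ = -2 * R * ∑ i : Fin N, Real.log (pTok φ w x (pref y i) (y i)) := by
          rw [Finset.mul_sum]
      _ = -2 * R * Real.log (pSeq φ w x y) := by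
          rw [pSeq, Real.log_prod]
          exact fun i _ => (hpos w i).ne'
end
end
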